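/- Let X be the conjugation quandle on the conjugacy class of the 3-cycle (1 2 3) in the alternating group A₄ (a four-element indecomposable quandle in which every translation φᵢ has order 3). Then the finite enveloping group Ḡ_X = G_X / K, where K is the normal closure in G_X of {x_i³ : i ∈ X}, is isomorphic to SL(2,3), the group of 2×2 matrices of determinant 1 over the field with three elements. -/

import Mathlib

open Quandles

/-- A conjugacy class in a group, as a quandle under conjugation. -/
instance conjClassQuandle (G : Type) [Group G] (a : G) : Quandle {x : G // IsConj a x} where
  act x y := ⟨x.1 * y.1 * x.1⁻¹, y.2.trans (isConj_iff.mpr ⟨x.1, rfl⟩)⟩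
  self_distrib := by
    intro x y z
    apply Subtype.ext
    show x.1 * (y.1 * z.1 * y.1⁻¹) * x.1⁻¹ =
      (x.1 * y.1 * x.1⁻¹) * (x.1 * z.1 * x.1⁻¹) * (x.1 * y.1 * x.1⁻¹)⁻¹
    group
  invAct x y := ⟨x.1⁻¹ * y.1 * x.1, y.2.trans (isConj_iff.mpr ⟨x.1⁻¹, by group⟩)⟩
  left_inv x := by
    intro y
    apply Subtype.ext
    show x.1⁻¹ * (x.1 * y.1 * x.1⁻¹) * x.1 = y.1
    group
  right_inv x := by
    intro y
    apply Subtype.ext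
    show x.1 * (x.1⁻¹ * y.1 * x.1) * x.1⁻¹ = y.1
    group
  fix := by
    intro x
    apply Subtype.ext
    show x.1 * x.1 * x.1⁻¹ = x.1
    group

/-- The 3-cycle `(1 2 3)` in the symmetric group on four letters. -/
def c123 : Equiv.Perm (Fin 4) := Equiv.swap 0 1 * Equiv.swap 1 2

theorem c123_mem : c123 ∈ alternatingGroup (Fin 4) := by
  rw [Equiv.Perm.mem_alternatingGroup]
  decide

/-- The conjugacy class of the 3-cycle `(1 2 3)` in the alternating group `A₄`,
as a conjugation quandle. -/
def XA4 : Type :=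
  {x : alternatingGroup (Fin 4) // IsConj (⟨c123, c123_mem⟩ : alternatingGroup (Fin 4)) x}

instance : Quandle XA4 :=
  conjClassQuandle (alternatingGroup (Fin 4)) ⟨c123, c123_mem⟩

/-- The kernel of the projection onto the finite enveloping group: the normal closure
of the set of the cubes `x_i³` (every translation of `XA4` has order 3). -/
def KA4 : Subgroup (Rack.EnvelGroup XA4) :=
  Subgroup.normalClosure
    {w | ∃ i : XA4, w = (Rack.toEnvelGroup XA4 i : Rack.EnvelGroup XA4) ^ 3}

instance : KA4.Normal := Subgroup.normalClosure_normal

/-!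
Write `a` and `b` for the generators of `Ḡ_X` indexed by the 3-cycles `(1 2 3)` and `(2 4 3)`.
Since `(1 2 3) ◃ ((2 4 3) ◃ (1 2 3)) = (2 4 3)`, the rack relations give the braid relation
`aba = bab`; conjugation by `a` produces the other two generators, so `a` and `b` generate
`Ḡ_X`, and `a³ = 1`. In such a quotient of the braid group `B₃` the element `z = (aba)²` is
central with `z² = 1`, and `b aⁱ b` equals `z a² b a²`, `aba` or `z a` according to `i` mod 3.
Hence left multiplication by `a` and `b` maps the set of the 24 words `zᵉ aᵏ` and `zᵉ aⁱ b aᵏ`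
into itself, so these words exhaust `Ḡ_X`. A rack map from `X` to `SL(2, 3)` induces a
homomorphism sending these 24 words to 24 distinct matrices, so it is an isomorphism.
-/

section Braid

variable {G : Type*} [Group G] {a b z : G}

theorem inv_eq_sq_of_pow_three {g : G} (hg : g ^ 3 = 1) : g⁻¹ = g ^ 2 := by
  rw [inv_eq_iff_mul_eq_one, ← pow_succ', hg]

theorem pow_finVal_add {n : ℕ} {g : G} (hg : g ^ n = 1) (j k : Fin n) :
    g ^ ((j + k : Fin n) : ℕ) = g ^ (j : ℕ) * g ^ (k : ℕ) := by
  rw [Fin.val_add, ← pow_eq_pow_mod _ hg, pow_add]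

theorem aba_mul_a (hab : a * b * a = b * a * b) : a * b * a * a = b * (a * b * a) := by
  nth_rw 1 [hab]; group

theorem aba_mul_b (hab : a * b * a = b * a * b) : a * b * a * b = a * (a * b * a) := by
  nth_rw 2 [hab]; group

theorem commute_aba_sq_a (hab : a * b * a = b * a * b) : Commute ((a * b * a) ^ 2) a := by
  rw [Commute, SemiconjBy, sq, mul_assoc, aba_mul_a hab, ← mul_assoc, aba_mul_b hab, mul_assoc]

theorem commute_aba_sq_b (hab : a * b * a = b * a * b) : Commute ((a * b * a) ^ 2) b := by
  rw [Commute, SemiconjBy, sq, mul_assoc, aba_mul_b hab, ← mul_assoc, aba_mul_a hab, mul_assoc]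

theorem mul_aba_mul_a (hab : a * b * a = b * a * b) :
    a * (a * b * a) * a = a * b * a * a⁻¹ * (a * b * a) := by
  calc a * (a * b * a) * a = a * (a * b * a * a) := by group
    _ = _ := by rw [aba_mul_a hab]; group

theorem b_pow_three_of_braid (hab : a * b * a = b * a * b) (ha : a ^ 3 = 1) : b ^ 3 = 1 := by
  have hconj : b = (a * b * a) * a * (a * b * a)⁻¹ := by
    rw [aba_mul_a hab]; group
  rw [hconj, conj_pow, ha]; group

theorem aba_pow_four (hab : a * b * a = b * a * b) (ha : a ^ 3 = 1) : (a * b * a) ^ 4 = 1 := by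
  have hb3 := b_pow_three_of_braid hab ha
  have ha2 : a⁻¹ * a⁻¹ = a := by rw [← mul_inv_rev, inv_eq_iff_mul_eq_one, ← pow_three', ha]
  rw [show b = a⁻¹ * (a * b * a) * a⁻¹ by group] at hb3
  have hmul := mul_aba_mul_a hab
  have hcomm := (commute_aba_sq_a hab).inv_right.symm
  generalize a * b * a = d at hb3 hmul hcomm ⊢
  calc d ^ 4 = d ^ 2 * d ^ 2 * (a⁻¹ * a⁻¹ * a⁻¹) := by
        rw [ha2, mul_inv_cancel, mul_one, ← pow_add]
    _ = a⁻¹ * d ^ 2 * a⁻¹ * d ^ 2 * a⁻¹ := by simp only [mul_assoc, hcomm.left_comm]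
    _ = a⁻¹ * d * (d * a⁻¹ * d) * d * a⁻¹ := by simp only [sq]; group
    _ = a⁻¹ * d * (a⁻¹ * a⁻¹ * d * (a⁻¹ * a⁻¹)) * d * a⁻¹ := by rw [ha2, hmul]
    _ = (a⁻¹ * d * a⁻¹) ^ 3 := by rw [pow_three]; group
    _ = 1 := hb3

theorem b_mul_a_sq_mul_b (hab : a * b * a = b * a * b) (ha : a ^ 3 = 1) :
    b * a ^ 2 * b = (a * b * a) ^ 2 * a := by
  calc b * a ^ 2 * b = a⁻¹ * (a * b * a) ^ 2 * a⁻¹ := by rw [sq, sq]; group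
    _ = (a * b * a) ^ 2 * (a⁻¹ * a⁻¹) := by rw [(commute_aba_sq_a hab).inv_right.symm.eq]; group
    _ = (a * b * a) ^ 2 * a := by rw [← mul_inv_rev, ← sq, ← inv_eq_sq_of_pow_three ha, inv_inv]

theorem b_sq_of_braid (hab : a * b * a = b * a * b) (ha : a ^ 3 = 1) :
    b ^ 2 = (a * b * a) ^ 2 * a ^ 2 * b * a ^ 2 := by
  have hinv : (a * b * a)⁻¹ = (a * b * a) ^ 2 * (a * b * a) := by
    rw [inv_eq_iff_mul_eq_one, ← pow_succ, ← pow_succ', aba_pow_four hab ha]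
  calc b ^ 2 = b⁻¹ := (inv_eq_sq_of_pow_three (b_pow_three_of_braid hab ha)).symm
    _ = a * (a * b * a)⁻¹ * a := by group
    _ = (a * b * a) ^ 2 * (a * (a * b * a) * a) := by
        rw [hinv, ← mul_assoc a, (commute_aba_sq_a hab).symm.eq]; simp only [mul_assoc]
    _ = (a * b * a) ^ 2 * a ^ 2 * b * a ^ 2 := by simp only [sq, mul_assoc]

def normalForm (z a b : G) : Fin 2 × Option (Fin 3) × Fin 3 → G
  | (e, none, k) => z ^ (e : ℕ) * a ^ (k : ℕ)
  | (e, some i, k) => z ^ (e : ℕ) * a ^ (i : ℕ) * b * a ^ (k : ℕ)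

theorem map_normalForm {H : Type*} [Group H] (f : G →* H) (x : Fin 2 × Option (Fin 3) × Fin 3) :
    f (normalForm z a b x) = normalForm (f z) (f a) (f b) x := by
  obtain ⟨e, _ | i, k⟩ := x <;> simp only [normalForm, map_mul, map_pow]

theorem mem_range_normalForm (hza : Commute z a) (hzb : Commute z b) (hz : z ^ 2 = 1)
    (ha : a ^ 3 = 1) (hbb : b ^ 2 = z * a ^ 2 * b * a ^ 2) (hbab : b * a * b = a * b * a)
    (hbaab : b * a ^ 2 * b = z * a) {g : G} (hg : g ∈ Submonoid.closure {a, b}) :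
    g ∈ Set.range (normalForm z a b) := by
  induction hg using Submonoid.closure_induction_left with
  | one => exact ⟨(0, none, 0), by simp only [normalForm, Fin.val_zero, pow_zero, mul_one]⟩
  | mul_left s hs g _ ih =>
    obtain ⟨⟨e, _ | i, k⟩, rfl⟩ := ih <;> rcases hs with hs | hs <;> subst s
    · refine ⟨(e, none, 1 + k), ?_⟩
      simp only [normalForm, pow_finVal_add ha, Fin.val_one, pow_one]
      rw [← mul_assoc, ← mul_assoc, (hza.pow_left _).eq]
    · refine ⟨(e, some 0, k), ?_⟩
      simp only [normalForm, Fin.val_zero, pow_zero, mul_one]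
      rw [← mul_assoc, (hzb.pow_left _).eq]
    · refine ⟨(e, some (1 + i), k), ?_⟩
      simp only [normalForm, pow_finVal_add ha, Fin.val_one, pow_one]
      rw [← mul_assoc, (hza.pow_left _).eq]; simp only [mul_assoc]
    · have hmul : b * normalForm z a b (e, some i, k) =
          z ^ (e : ℕ) * (b * a ^ (i : ℕ) * b) * a ^ (k : ℕ) := by
        simp only [normalForm, mul_assoc]; rw [← mul_assoc b, ← (hzb.pow_left _).eq, mul_assoc]
      rw [hmul]
      fin_cases i
      · exact ⟨(1 + e, some 2, 2 + k), by
          simp only [normalForm, Fin.isValue, Fin.val_one, Fin.val_two, pow_zero,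
            mul_one, pow_finVal_add ha, pow_finVal_add hz, ← sq, hbb]; group⟩
      · exact ⟨(e, some 1, 1 + k), by
          simp only [normalForm, Fin.isValue, Fin.val_one, pow_one, pow_finVal_add ha, hbab]; group⟩
      · exact ⟨(1 + e, none, 1 + k), by
          simp only [normalForm, Fin.isValue, Fin.val_one, pow_one, pow_finVal_add ha,
            pow_finVal_add hz, hbaab]; group⟩

theorem mem_range_normalForm_of_braid (hab : a * b * a = b * a * b) (ha : a ^ 3 = 1) {g : G}
    (hg : g ∈ Submonoid.closure {a, b}) : g ∈ Set.range (normalForm ((a * b * a) ^ 2) a b) :=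
  mem_range_normalForm (commute_aba_sq_a hab) (commute_aba_sq_b hab)
    (by rw [← pow_mul, aba_pow_four hab ha]) ha (b_sq_of_braid hab ha) hab.symm
    (b_mul_a_sq_mul_b hab ha) hg

end Braid

theorem Rack.braid_of_act_act_eq {R G : Type*} [Rack R] [Group G] (f : R →◃ Quandle.Conj G)
    {i j : R} (h : i ◃ (j ◃ i) = j) : f i * f j * f i = f j * f i * f j := by
  have hf := congrArg f h
  simp only [ShelfHom.map_act, Quandle.conj_act_eq_conj] at hf
  calc f i * f j * f i = f i * (f j * f i * (f j)⁻¹) * (f i)⁻¹ * (f i * f j) := by group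
    _ = f j * f i * f j := by rw [hf]; group

theorem Rack.closure_range_toEnvelGroup (R : Type*) [Rack R] :
    Subgroup.closure (Set.range (Rack.toEnvelGroup R)) = ⊤ := by
  refine Subgroup.eq_top_iff' _ |>.mpr fun g => Quotient.inductionOn g fun w => ?_
  induction w with
  | unit => exact one_mem _
  | incl x => exact Subgroup.subset_closure ⟨x, rfl⟩
  | mul x y hx hy => exact mul_mem hx hy
  | inv x hx => exact inv_mem hx

namespace XA4

instance : DecidableEq XA4 :=
  inferInstanceAs (DecidableEq {x : alternatingGroup (Fin 4) // IsConj _ x})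

instance : Fintype XA4 := Subtype.fintype _

def cyc123 : XA4 := ⟨⟨c123, c123_mem⟩, IsConj.refl _⟩

-- `(2 4 3)` in the 1-based cycle notation of `c123`.
def cyc243 : XA4 :=
  ⟨⟨Equiv.swap 1 3 * Equiv.swap 3 2, Equiv.Perm.mem_alternatingGroup.mpr (by decide)⟩, by decide⟩

theorem act_act_cyc243 : cyc123 ◃ (cyc243 ◃ cyc123) = cyc243 := by decide

theorem eq_or_eq_or_eq_or_eq (p : XA4) :
    p = cyc123 ∨ p = cyc243 ∨ p = cyc123 ◃ cyc243 ∨ p = cyc123 ◃ (cyc123 ◃ cyc243) := by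
  revert p; decide

def toFinEnvel : XA4 →◃ Quandle.Conj (Rack.EnvelGroup XA4 ⧸ KA4) :=
  (Quandle.Conj.map (QuotientGroup.mk' KA4)).comp (Rack.toEnvelGroup XA4)

theorem toFinEnvel_pow_three (p : XA4) : toFinEnvel p ^ 3 = 1 :=
  (QuotientGroup.eq_one_iff _).mpr (Subgroup.subset_normalClosure ⟨p, rfl⟩)

theorem closure_range_toFinEnvel : Subgroup.closure (Set.range toFinEnvel) = ⊤ := by
  rw [show Set.range toFinEnvel = QuotientGroup.mk' KA4 '' Set.range (Rack.toEnvelGroup XA4) from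
      Set.range_comp (QuotientGroup.mk' KA4) (Rack.toEnvelGroup XA4), ← MonoidHom.map_closure,
    Rack.closure_range_toEnvelGroup,
    Subgroup.map_top_of_surjective _ (QuotientGroup.mk'_surjective _)]

theorem submonoidClosure_pair_eq_top :
    Submonoid.closure {toFinEnvel cyc123, toFinEnvel cyc243} = ⊤ := by
  set H := Subgroup.closure {toFinEnvel cyc123, toFinEnvel cyc243}
  have ha : toFinEnvel cyc123 ∈ H := Subgroup.subset_closure (Set.mem_insert _ _)
  have hb : toFinEnvel cyc243 ∈ H := Subgroup.subset_closure (Set.mem_insert_of_mem _ rfl)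
  have hconj : ∀ p, toFinEnvel p ∈ H → toFinEnvel (cyc123 ◃ p) ∈ H := fun p hp => by
    rw [ShelfHom.map_act, Quandle.conj_act_eq_conj]
    exact mul_mem (mul_mem ha hp) (inv_mem ha)
  have htop : H = ⊤ := by
    rw [eq_top_iff, ← closure_range_toFinEnvel, Subgroup.closure_le]
    rintro _ ⟨p, rfl⟩
    rcases eq_or_eq_or_eq_or_eq p with rfl | rfl | rfl | rfl
    exacts [ha, hb, hconj _ hb, hconj _ (hconj _ hb)]
  rw [← Subgroup.closure_toSubmonoid_of_isOfFinOrder]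
  · change H.toSubmonoid = ⊤
    rw [htop, Subgroup.top_toSubmonoid]
  rintro _ (rfl | rfl) <;>
    exact isOfFinOrder_iff_pow_eq_one.mpr ⟨3, three_pos, toFinEnvel_pow_three _⟩

-- The images form a conjugacy class of unipotent elements of order 3 in `SL(2, 3)`.
open Matrix in
def toSL : XA4 →◃ Quandle.Conj (SpecialLinearGroup (Fin 2) (ZMod 3)) where
  toFun p :=
    if p = cyc123 then ⟨!![1, 0; 2, 1], by decide⟩
    else if p = cyc243 then ⟨!![0, 1; 2, 2], by decide⟩
    else if p = cyc123 ◃ cyc243 then ⟨!![1, 1; 0, 1], by decide⟩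
    else ⟨!![2, 1; 2, 0], by decide⟩
  map_act' := by decide

def finEnvelToSL : Rack.EnvelGroup XA4 ⧸ KA4 →* Matrix.SpecialLinearGroup (Fin 2) (ZMod 3) :=
  QuotientGroup.lift KA4 (Rack.toEnvelGroup.map toSL) <| Subgroup.normalClosure_le_normal <| by
    rintro _ ⟨p, rfl⟩
    change toSL p ^ 3 = 1
    revert p; decide

theorem finEnvelToSL_toFinEnvel (p : XA4) : finEnvelToSL (toFinEnvel p) = toSL p := rfl

theorem bijective_normalForm_toSL : Function.Bijective
    (normalForm ((toSL cyc123 * toSL cyc243 * toSL cyc123) ^ 2) (toSL cyc123) (toSL cyc243)) := by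
  decide

end XA4

theorem stmt18 :
    Nonempty ((Rack.EnvelGroup XA4 ⧸ KA4) ≃*
      Matrix.SpecialLinearGroup (Fin 2) (ZMod 3)) := by
  set a := XA4.toFinEnvel XA4.cyc123
  set b := XA4.toFinEnvel XA4.cyc243
  have hsurj : Function.Surjective (normalForm ((a * b * a) ^ 2) a b) := fun g =>
    mem_range_normalForm_of_braid (Rack.braid_of_act_act_eq _ XA4.act_act_cyc243)
      (XA4.toFinEnvel_pow_three _) (XA4.submonoidClosure_pair_eq_top ▸ Submonoid.mem_top g)
  have hbij : Function.Bijective (XA4.finEnvelToSL ∘ normalForm ((a * b * a) ^ 2) a b) := by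
    convert XA4.bijective_normalForm_toSL using 1
    funext x
    simp only [Function.comp_apply, map_normalForm, map_pow, map_mul,
      XA4.finEnvelToSL_toFinEnvel, a, b]
  exact ⟨MulEquiv.ofBijective XA4.finEnvelToSL
    ((Function.Bijective.of_comp_iff _ ⟨hbij.injective.of_comp, hsurj⟩).mp hbij)⟩
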